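/- arXiv:2406.06317 — 2 statements merged into one kernel-verified Lean document; each statement's English description precedes it below -/
import Mathlib

section
/- Let G be a connected graph, K ⊆ V(G) a clique, x a new simplicial vertex attached to K forming G_K. Then the set R_0 = { T(0, x, v_{λ(T)}) : T a search tree on G } of all search trees on G_K rooted at x induces a subgraph of the rotation graph R(G_K) isomorphic to R(G), via the map T ↦ T(0, x, v_{λ(T)}). -/
open scoped Classical

universe u

variable {V : Type u}

/-- A rooted tree structure on a support set: data only, well-formedness is `RTree.WF`. -/
structure RTree (V : Type u) where
  supp : Set V
  root : V
  parent : V → Option V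

namespace RTree

def parentRel (T : RTree V) (a b : V) : Prop := T.parent a = some b

/-- `u` is an ancestor of `v` in `T` (reflexively). -/
def isAncestor (T : RTree V) (u v : V) : Prop :=
  Relation.ReflTransGen T.parentRel v u

def WF (T : RTree V) : Prop :=
  T.root ∈ T.supp ∧
  T.parent T.root = none ∧
  (∀ v, v ∉ T.supp → T.parent v = none) ∧
  (∀ v ∈ T.supp, v ≠ T.root → ∃ u ∈ T.supp, T.parent v = some u) ∧
  (∀ v ∈ T.supp, T.isAncestor T.root v)

/-- The vertex set of the subtree `T|c` rooted at `c`. -/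
def descendants (T : RTree V) (c : V) : Set V :=
  {v | v ∈ T.supp ∧ T.isAncestor c v}

/-- Iterated parent. -/
def pIter (T : RTree V) : ℕ → V → Option V
  | 0, w => some w
  | n + 1, w => (T.parent w).bind (T.pIter n)

/-- The depth `d_{T,v}` of `v` in `T` (distance to the root). -/
noncomputable def depthOf (T : RTree V) (v : V) : ℕ :=
  sInf {n | T.pIter n v = some T.root}

/-- The subtree of `T` rooted at `c`. -/
noncomputable def subtreeAt (T : RTree V) (c : V) : RTree V where
  supp := T.descendants c
  root := c
  parent := fun w => if w = c then none else if w ∈ T.descendants c then T.parent w else none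

/-- The vertex at depth `i` on the path from the root to `v`. -/
noncomputable def ancAt (T : RTree V) (v : V) (i : ℕ) : V :=
  (T.pIter (T.depthOf v - i) v).getD T.root

/-- Insertion `T(i,x,v)` of a new vertex `x` at depth `i` along the root-to-`v` path:
`i = 0` makes `x` the new root, `i = d_{T,v}+1` adds `x` as a new child of `v`, and
for `1 ≤ i ≤ d_{T,v}` the `i`-th edge of the root-to-`v` path is subdivided by `x`. -/
noncomputable def insertAt (T : RTree V) (i : ℕ) (x v : V) : RTree V :=
  if i = 0 then
    { supp := insert x T.supp
      root := x
      parent := fun w => if w = x then none else if w = T.root then some x else T.parent w }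
  else if i = T.depthOf v + 1 then
    { supp := insert x T.supp
      root := T.root
      parent := fun w => if w = x then some v else T.parent w }
  else
    { supp := insert x T.supp
      root := T.root
      parent := fun w =>
        if w = x then some (T.ancAt v (i - 1))
        else if w = T.ancAt v i then some x
        else T.parent w }

/-- Elimination `p(T,x)` of a vertex `x` (meaningful when `x` has at most one child). -/
noncomputable def elim (T : RTree V) (x : V) : RTree V where
  supp := T.supp \ {x}
  root :=
    if T.root = x then (if h : ∃ w, T.parent w = some x then h.choose else T.root) else T.root
  parent := fun w =>
    if w = x then none
    else if T.parent w = some x then T.parent x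
    else T.parent w

end RTree

/-- Reachability inside the vertex set `s`, i.e. in the induced subgraph `G[s]`. -/
def reachWithin (G : SimpleGraph V) (s : Set V) : V → V → Prop :=
  Relation.ReflTransGen (fun a b => a ∈ s ∧ b ∈ s ∧ G.Adj a b)

/-- Recursive definition of a search tree: the children of the root are the roots of
search trees on the connected components of the graph minus the root. -/
inductive IsSearchTreeRec {V : Type u} (G : SimpleGraph V) : RTree V → Prop
  | intro (T : RTree V) (hwf : T.WF)
      (hconn : ∀ a ∈ T.supp, ∀ b ∈ T.supp, reachWithin G T.supp a b)
      (hcomp : ∀ c, T.parent c = some T.root →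
        ∀ w, w ∈ T.descendants c ↔
          (w ∈ T.supp ∧ w ≠ T.root ∧ reachWithin G (T.supp \ {T.root}) c w))
      (hrec : ∀ c, T.parent c = some T.root → IsSearchTreeRec G (T.subtreeAt c)) :
      IsSearchTreeRec G T

/-- `T` is a search tree on the induced subgraph `G[s]`. -/
def IsSearchTreeOn (G : SimpleGraph V) (s : Set V) (T : RTree V) : Prop :=
  T.supp = s ∧ IsSearchTreeRec G T

/-- `T` is a search tree on `G`. -/
def IsSearchTree (G : SimpleGraph V) (T : RTree V) : Prop :=
  IsSearchTreeOn G Set.univ T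

/-- The `uv`-rotation of `T` (for `v` a child of `u`): `u` becomes a child of `v`, `v` takes
`u`'s old parent, and each subtree `S` of `v` is reattached below `u` iff `u` has a
`G`-neighbour in `S`. -/
noncomputable def rotate (G : SimpleGraph V) (T : RTree V) (u v : V) : RTree V where
  supp := T.supp
  root := if T.root = u then v else T.root
  parent := fun w =>
    if w = v then T.parent u
    else if w = u then some v
    else if T.parent w = some v then
      (if ∃ z ∈ T.descendants w, G.Adj u z then some u else some v)
    else T.parent w

def IsRotation (G : SimpleGraph V) (S S' : RTree V) : Prop :=
  ∃ u v, S.parent v = some u ∧ S' = rotate G S u v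

def rotAdj (G : SimpleGraph V) (S S' : RTree V) : Prop :=
  S ≠ S' ∧ (IsRotation G S S' ∨ IsRotation G S' S)

/-- The rotation graph of the induced subgraph `G[s]`: vertices are the search trees on
`G[s]`, two trees being adjacent iff they differ by a single rotation. -/
def rotationGraphOn (G : SimpleGraph V) (s : Set V) :
    SimpleGraph {T : RTree V // IsSearchTreeOn G s T} where
  Adj T T' := rotAdj G T.1 T'.1
  symm := ⟨fun T T' h => ⟨Ne.symm h.1, Or.symm h.2⟩⟩
  loopless := ⟨fun T h => h.1 rfl⟩

/-- A vertex of `K` of maximal depth in `T` (the vertex `v_{λ(T)}`). -/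
noncomputable def deepestIn (T : RTree V) (K : Set V) : V :=
  if h : ∃ u, u ∈ K ∧ ∀ w ∈ K, T.depthOf w ≤ T.depthOf u then h.choose else T.root

/-- `u` and `v` have different relative order in `T` and `T'`. -/
def diffRelOrder (T T' : RTree V) (u v : V) : Prop :=
  (T.isAncestor u v ∧ ¬ T'.isAncestor u v) ∨ (¬ T.isAncestor u v ∧ T'.isAncestor u v)

/-- The step from `S` to `S'` is a rotation of the pair `u`, `v`. -/
def isUVStep (G : SimpleGraph V) (u v : V) (S S' : RTree V) : Prop :=
  (S.parent v = some u ∧ S' = rotate G S u v) ∨ (S.parent u = some v ∧ S' = rotate G S v u)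

/-- A threshold graph: obtainable from the one-vertex graph by repeatedly adding either an
isolated vertex or a universal vertex. -/
def IsThresholdGraph {V : Type u} [Fintype V] (G : SimpleGraph V) : Prop :=
  ∃ e : Fin (Fintype.card V) ≃ V,
    ∀ i : Fin (Fintype.card V),
      (∀ j, j < i → ¬ G.Adj (e i) (e j)) ∨ (∀ j, j < i → G.Adj (e i) (e j))

/-- The complete split graph `SPK_{p,q}`: a clique of size `p` completely joined to an
independent set of size `q`. -/
def completeSplitGraph (p q : ℕ) : SimpleGraph (Fin p ⊕ Fin q) where
  Adj a b := a ≠ b ∧ (a.isLeft = true ∨ b.isLeft = true)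
  symm := ⟨fun a b h => ⟨Ne.symm h.1, Or.symm h.2⟩⟩
  loopless := ⟨fun a h => h.1 rfl⟩

/-! Making the new vertex `x` the root of a search tree `T` on `G - x` commutes with rotations.
A rotation of `T(0,x,v)` never involves `x`, because rotating `x` with its only child would move
`x` off the root; every other rotation acts below `x` exactly as it acts on `T`, the subtrees of
the vertices other than `x` being unchanged. Since eliminating `x` recovers `T`, the map
`T ↦ T(0,x,v)` is injective and reflects rotations as well. -/

section reachWithin

variable {G : SimpleGraph V} {s : Set V} {a b x : V}

theorem reachWithin_mono {t : Set V} (hst : s ⊆ t) (h : reachWithin G s a b) :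
    reachWithin G t a b :=
  Relation.ReflTransGen.mono (fun _ _ hab => ⟨hst hab.1, hst hab.2.1, hab.2.2⟩) _ _ h

theorem reachWithin_symm (h : reachWithin G s a b) : reachWithin G s b a := by
  induction h with
  | refl => exact .refl
  | tail _ hbc ih => exact .head ⟨hbc.2.1, hbc.1, hbc.2.2.symm⟩ ih

theorem reachWithin_insert_of_adj {k : V} (hconn : ∀ a ∈ s, ∀ b ∈ s, reachWithin G s a b)
    (hk : k ∈ s) (hxk : G.Adj x k) :
    ∀ a ∈ insert x s, ∀ b ∈ insert x s, reachWithin G (insert x s) a b := by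
  have hfrom_x : ∀ b ∈ insert x s, reachWithin G (insert x s) x b := by
    rintro b (rfl | hb)
    · exact .refl
    · exact .head ⟨Set.mem_insert x _, Set.mem_insert_of_mem x hk, hxk⟩
        (reachWithin_mono (Set.subset_insert x s) (hconn k hk b hb))
  exact fun a ha b hb => (reachWithin_symm (hfrom_x a ha)).trans (hfrom_x b hb)

end reachWithin

namespace RTree

variable {T A B : RTree V} {x u v w z : V}

theorem ext {T S : RTree V} (hsupp : T.supp = S.supp) (hroot : T.root = S.root)
    (hparent : T.parent = S.parent) : T = S := by
  cases T; cases S; simp_all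

-- The part of `WF` that `rotate` evidently preserves; it is all `insertRoot` needs to be undone.
structure IsPretree (T : RTree V) : Prop where
  root_mem : T.root ∈ T.supp
  parent_root : T.parent T.root = none
  parent_eq_none_of_not_mem : ∀ v, v ∉ T.supp → T.parent v = none
  parent_mem : ∀ {v u}, T.parent v = some u → u ∈ T.supp

theorem WF.isPretree (hT : T.WF) : T.IsPretree where
  root_mem := hT.1
  parent_root := hT.2.1
  parent_eq_none_of_not_mem := hT.2.2.1
  parent_mem {v u} h := by
    have hv : v ∈ T.supp := by_contra fun hv => by simp [hT.2.2.1 v hv] at h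
    have hvr : v ≠ T.root := by rintro rfl; simp [hT.2.1] at h
    obtain ⟨u', hu', hvu'⟩ := hT.2.2.2.1 v hv hvr
    obtain rfl : u = u' := Option.some.inj (h.symm.trans hvu')
    exact hu'

noncomputable def insertRoot (T : RTree V) (x : V) : RTree V where
  supp := insert x T.supp
  root := x
  parent w := if w = x then none else if w = T.root then some x else T.parent w

theorem insertAt_zero : T.insertAt 0 x v = T.insertRoot x :=
  if_pos rfl

theorem parent_eq_of_insertRoot_parent (h : (T.insertRoot x).parent v = some u) (hu : u ≠ x) :
    T.parent v = some u := by
  simp only [insertRoot] at h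
  split_ifs at h
  · exact absurd (Option.some.inj h).symm hu
  · exact h

theorem isAncestor_of_insertRoot (hw : w ≠ x) (h : (T.insertRoot x).isAncestor w z) :
    T.isAncestor w z ∧ z ≠ x := by
  induction h using Relation.ReflTransGen.head_induction_on with
  | refl => exact ⟨.refl, hw⟩
  | @head a c hac _ ih =>
    have hax : a ≠ x := by rintro rfl; simp [parentRel, insertRoot] at hac
    exact ⟨.head (parent_eq_of_insertRoot_parent hac ih.2) ih.1, hax⟩

namespace IsPretree

theorem mem_of_parent_eq_some (hT : T.IsPretree) (h : T.parent v = some u) : v ∈ T.supp :=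
  by_contra fun hv => by simp [hT.parent_eq_none_of_not_mem v hv] at h

theorem ne_root_of_parent_eq_some (hT : T.IsPretree) (h : T.parent v = some u) : v ≠ T.root := by
  rintro rfl; simp [hT.parent_root] at h

theorem parent_ne_some_of_not_mem (hT : T.IsPretree) (hx : x ∉ T.supp) : T.parent w ≠ some x :=
  fun h => hx (hT.parent_mem h)

theorem insertRoot_parent (hT : T.IsPretree) (hx : x ∉ T.supp) (h : T.parent v = some u) :
    (T.insertRoot x).parent v = some u := by
  have hvx : v ≠ x := by rintro rfl; exact hx (hT.mem_of_parent_eq_some h)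
  simp [insertRoot, hvx, hT.ne_root_of_parent_eq_some h, h]

theorem insertRoot_parent_eq_some_self_iff (hT : T.IsPretree) (hx : x ∉ T.supp) :
    (T.insertRoot x).parent w = some x ↔ w = T.root := by
  have hrx : T.root ≠ x := by rintro h; exact hx (h ▸ hT.root_mem)
  by_cases hwx : w = x
  · subst hwx; simp [insertRoot, Ne.symm hrx]
  · by_cases hwr : w = T.root
    · simp [insertRoot, hwr, hrx]
    · simp [insertRoot, hwx, hwr, hT.parent_ne_some_of_not_mem hx]

theorem isAncestor_insertRoot (hT : T.IsPretree) (hx : x ∉ T.supp) (h : T.isAncestor w z) :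
    (T.insertRoot x).isAncestor w z :=
  Relation.ReflTransGen.mono (fun _ _ => hT.insertRoot_parent hx) _ _ h

theorem descendants_insertRoot (hT : T.IsPretree) (hx : x ∉ T.supp) (hw : w ≠ x) :
    (T.insertRoot x).descendants w = T.descendants w := by
  ext z
  constructor
  · rintro ⟨hz, hwz⟩
    obtain ⟨hwz, hzx⟩ := isAncestor_of_insertRoot hw hwz
    exact ⟨hz.resolve_left hzx, hwz⟩
  · rintro ⟨hz, hwz⟩
    exact ⟨Set.mem_insert_of_mem x hz, hT.isAncestor_insertRoot hx hwz⟩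

theorem rotate_insertRoot (G : SimpleGraph V) (hT : T.IsPretree) (hx : x ∉ T.supp)
    (h : T.parent v = some u) :
    rotate G (T.insertRoot x) u v = (rotate G T u v).insertRoot x := by
  have hvx : v ≠ x := by rintro rfl; exact hx (hT.mem_of_parent_eq_some h)
  have hux : u ≠ x := by rintro rfl; exact hx (hT.parent_mem h)
  have hvr := hT.ne_root_of_parent_eq_some h
  refine RTree.ext rfl ?_ (funext fun w => ?_)
  · simp [rotate, insertRoot, Ne.symm hux]
  by_cases hwx : w = x
  · subst hwx; simp [rotate, insertRoot, Ne.symm hvx, Ne.symm hux]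
  by_cases hru : T.root = u
  · subst hru
    by_cases hwv : w = v
    · simp [rotate, insertRoot, hwv, hvx, hux]
    by_cases hwr : w = T.root
    · simp [rotate, insertRoot, hwr, hux, Ne.symm hvr]
    · simp only [rotate, hT.descendants_insertRoot hx hwx]
      simp [insertRoot, hwx, hwv, hwr]
  · by_cases hwv : w = v
    · simp [rotate, insertRoot, hwv, hvx, hux, hvr, hru, Ne.symm hru]
    by_cases hwu : w = u
    · simp [rotate, insertRoot, hwu, hux, hru, Ne.symm hru]
    by_cases hwr : w = T.root
    · subst hwr; simp [rotate, insertRoot, hwv, hwu, hwx, Ne.symm hvx]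
    · simp only [rotate, hT.descendants_insertRoot hx hwx]
      simp [insertRoot, hwx, hwv, hwu, hwr, hru]

theorem elim_insertRoot (hT : T.IsPretree) (hx : x ∉ T.supp) : (T.insertRoot x).elim x = T := by
  have hroot : ∃ w, (T.insertRoot x).parent w = some x :=
    ⟨T.root, (hT.insertRoot_parent_eq_some_self_iff hx).2 rfl⟩
  refine RTree.ext ?_ ?_ (funext fun w => ?_)
  · simp [elim, insertRoot, hx]
  · simp only [elim]
    rw [if_pos (show (T.insertRoot x).root = x from rfl), dif_pos hroot]
    exact (hT.insertRoot_parent_eq_some_self_iff hx).1 hroot.choose_spec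
  · simp only [elim]
    by_cases hwx : w = x
    · rw [if_pos hwx, hwx, hT.parent_eq_none_of_not_mem x hx]
    rw [if_neg hwx]
    by_cases hwr : w = T.root
    · rw [if_pos ((hT.insertRoot_parent_eq_some_self_iff hx).2 hwr), hwr, hT.parent_root]
      simp [insertRoot]
    · rw [if_neg (mt (hT.insertRoot_parent_eq_some_self_iff hx).1 hwr)]
      simp [insertRoot, hwx, hwr]

theorem insertRoot_inj (hA : A.IsPretree) (hB : B.IsPretree) (hxA : x ∉ A.supp)
    (hxB : x ∉ B.supp) : A.insertRoot x = B.insertRoot x ↔ A = B :=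
  ⟨fun h => by rw [← hA.elim_insertRoot hxA, h, hB.elim_insertRoot hxB], congrArg (insertRoot · x)⟩

theorem rotate (G : SimpleGraph V) (hT : T.IsPretree) (h : T.parent v = some u) :
    (_root_.rotate G T u v).IsPretree := by
  have hv := hT.mem_of_parent_eq_some h
  have hu := hT.parent_mem h
  have hvr := hT.ne_root_of_parent_eq_some h
  refine ⟨?_, ?_, ?_, ?_⟩
  · by_cases hru : T.root = u <;> simp [_root_.rotate, hru, hv, hT.root_mem]
  · by_cases hru : T.root = u
    · subst hru; simp [_root_.rotate, hT.parent_root]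
    · simp [_root_.rotate, hru, Ne.symm hvr, hT.parent_root]
  · intro w hw
    have hwv : w ≠ v := by rintro rfl; exact hw hv
    have hwu : w ≠ u := by rintro rfl; exact hw hu
    simp [_root_.rotate, hwv, hwu, hT.parent_eq_none_of_not_mem w hw]
  · intro w y hwy
    simp only [_root_.rotate] at hwy
    split_ifs at hwy <;> first
      | exact hT.parent_mem hwy
      | (obtain rfl := Option.some.inj hwy; assumption)

end IsPretree

theorem WF.descendants_root (hT : T.WF) : T.descendants T.root = T.supp :=
  Set.ext fun v => ⟨fun h => h.1, fun h => ⟨h, hT.2.2.2.2 v h⟩⟩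

theorem WF.insertRoot (hT : T.WF) (hx : x ∉ T.supp) : (T.insertRoot x).WF := by
  have hrx : T.root ≠ x := by rintro h; exact hx (h ▸ hT.1)
  refine ⟨Set.mem_insert x _, by simp [RTree.insertRoot], ?_, ?_, ?_⟩
  · intro v hv
    have hvx : v ≠ x := by rintro rfl; exact hv (Set.mem_insert v _)
    have hvs : v ∉ T.supp := fun h => hv (Set.mem_insert_of_mem x h)
    have hvr : v ≠ T.root := by rintro rfl; exact hvs hT.1
    simp [RTree.insertRoot, hvx, hvr, hT.2.2.1 v hvs]
  · rintro v (rfl | hv) hvx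
    · exact absurd rfl hvx
    replace hvx : v ≠ x := hvx
    by_cases hvr : v = T.root
    · exact ⟨x, Set.mem_insert x _, by simp [RTree.insertRoot, hvr, hrx]⟩
    · obtain ⟨u, hu, hvu⟩ := hT.2.2.2.1 v hv hvr
      exact ⟨u, Set.mem_insert_of_mem x hu, by simp [RTree.insertRoot, hvx, hvr, hvu]⟩
  · rintro v (rfl | hv)
    · exact .refl
    · refine (hT.isPretree.isAncestor_insertRoot hx (hT.2.2.2.2 v hv)).tail ?_
      simp [parentRel, RTree.insertRoot, hrx]

theorem WF.subtreeAt_insertRoot (hT : T.WF) (hx : x ∉ T.supp) :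
    (T.insertRoot x).subtreeAt T.root = T := by
  have hrx : T.root ≠ x := by rintro h; exact hx (h ▸ hT.1)
  have hdesc : (T.insertRoot x).descendants T.root = T.supp := by
    rw [hT.isPretree.descendants_insertRoot hx hrx, hT.descendants_root]
  refine RTree.ext hdesc rfl (funext fun w => ?_)
  simp only [subtreeAt, hdesc]
  by_cases hwr : w = T.root
  · rw [if_pos hwr, hwr, hT.2.1]
  by_cases hw : w ∈ T.supp
  · have hwx : w ≠ x := by rintro rfl; exact hx hw
    simp [RTree.insertRoot, hwr, hw, hwx]
  · simp [hwr, hw, hT.2.2.1 w hw]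

theorem isRotation_insertRoot_iff (G : SimpleGraph V)
    (hA : A.IsPretree) (hB : B.IsPretree) (hxA : x ∉ A.supp) (hxB : x ∉ B.supp) :
    IsRotation G (A.insertRoot x) (B.insertRoot x) ↔ IsRotation G A B := by
  constructor
  · rintro ⟨u, v, huv, hrot⟩
    -- rotating `x` with its child would make that child the root
    have hux : u ≠ x := by
      rintro rfl
      have hvx : v = u := by simpa [rotate, insertRoot] using (congrArg RTree.root hrot).symm
      simp [hvx, insertRoot] at huv
    have huv' := parent_eq_of_insertRoot_parent huv hux
    refine ⟨u, v, huv', ?_⟩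
    rw [hA.rotate_insertRoot G hxA huv', (hB.insertRoot_inj (hA.rotate G huv') hxB hxA)] at hrot
    exact hrot
  · rintro ⟨u, v, huv, rfl⟩
    exact ⟨u, v, hA.insertRoot_parent hxA huv, (hA.rotate_insertRoot G hxA huv).symm⟩

theorem rotAdj_insertRoot_iff (G : SimpleGraph V)
    (hA : A.IsPretree) (hB : B.IsPretree) (hxA : x ∉ A.supp) (hxB : x ∉ B.supp) :
    rotAdj G (A.insertRoot x) (B.insertRoot x) ↔ rotAdj G A B := by
  rw [rotAdj, rotAdj, Ne, Ne, hA.insertRoot_inj hB hxA hxB,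
    isRotation_insertRoot_iff G hA hB hxA hxB, isRotation_insertRoot_iff G hB hA hxB hxA]

end RTree

theorem isSearchTreeOn_insertRoot {G : SimpleGraph V} {s : Set V} {T : RTree V} {x k : V}
    (hT : IsSearchTreeOn G s T) (hx : x ∉ s) (hk : k ∈ s) (hxk : G.Adj x k) :
    IsSearchTreeOn G (insert x s) (T.insertRoot x) := by
  obtain ⟨rfl, hrec⟩ := hT
  obtain ⟨_, hwf, hconn, -, -⟩ := id hrec
  have hchild : ∀ c, (T.insertRoot x).parent c = some x → c = T.root := fun c =>
    (hwf.isPretree.insertRoot_parent_eq_some_self_iff hx).1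
  refine ⟨rfl, .intro _ (hwf.insertRoot hx) (reachWithin_insert_of_adj hconn hk hxk) ?_ ?_⟩
  · intro c hc w
    obtain rfl := hchild c hc
    have hrx : T.root ≠ x := by rintro h; exact hx (h ▸ hwf.1)
    rw [hwf.isPretree.descendants_insertRoot hx hrx, hwf.descendants_root]
    simp only [RTree.insertRoot, Set.insert_sdiff_self_of_notMem hx]
    refine ⟨fun hw => ⟨Set.mem_insert_of_mem x hw, ?_, hconn _ hwf.1 w hw⟩, ?_⟩
    · rintro rfl; exact hx hw
    · rintro ⟨hw, hwx, -⟩; exact hw.resolve_left hwx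
  · intro c hc
    rw [hchild c hc, hwf.subtreeAt_insertRoot hx]
    exact hrec

theorem rooted_at_x_copy_of_rotationGraph_general {V : Type u} (G' : SimpleGraph V)
    (x : V) (K : Set V) (hK : K.Nonempty) (hNx : G'.neighborSet x = K) :
    ∃ f : {T : RTree V // IsSearchTreeOn G' {x}ᶜ T} →
        {T : RTree V // IsSearchTreeOn G' Set.univ T},
      (∀ T, (f T).1 = T.1.insertAt 0 x (deepestIn T.1 K)) ∧
      Function.Injective f ∧
      (∀ T T', (rotationGraphOn G' {x}ᶜ).Adj T T' ↔
        (rotationGraphOn G' Set.univ).Adj (f T) (f T')) := by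
  obtain ⟨k, hk⟩ := hK
  have hxk : G'.Adj x k := by rwa [← SimpleGraph.mem_neighborSet, hNx]
  have hpre : ∀ T : {T : RTree V // IsSearchTreeOn G' {x}ᶜ T}, T.1.IsPretree ∧ x ∉ T.1.supp :=
    fun T => ⟨by obtain ⟨_, ⟨_, hwf, -⟩⟩ := T.2; exact hwf.isPretree, by simp [T.2.1]⟩
  refine ⟨fun T => ⟨T.1.insertRoot x, ?_⟩, fun T => RTree.insertAt_zero.symm, ?_, ?_⟩
  · rw [← Set.union_compl_self {x}, ← Set.insert_eq]
    exact isSearchTreeOn_insertRoot T.2 (by simp) hxk.ne' hxk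
  · intro T T' h
    exact Subtype.ext (((hpre T).1.insertRoot_inj (hpre T').1 (hpre T).2 (hpre T').2).1
      (congrArg Subtype.val h))
  · intro T T'
    exact (RTree.rotAdj_insertRoot_iff G' (hpre T).1 (hpre T').1 (hpre T).2 (hpre T').2).symm

/-- the set of search trees on `G_K` rooted at `x` induces a subgraph of
`R(G_K)` isomorphic to `R(G)`, via `T ↦ T(0,x,v_{λ(T)})`. -/
theorem rooted_at_x_copy_of_rotationGraph {V : Type u} [Fintype V] (G' : SimpleGraph V)
    (x : V) (K : Set V) (hK : K.Nonempty) (hNx : G'.neighborSet x = K)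
    (hclique : ∀ a ∈ K, ∀ b ∈ K, a ≠ b → G'.Adj a b)
    (hconn : ∀ a b : V, a ≠ x → b ≠ x → reachWithin G' {x}ᶜ a b) :
    ∃ f : {T : RTree V // IsSearchTreeOn G' {x}ᶜ T} →
        {T : RTree V // IsSearchTreeOn G' Set.univ T},
      (∀ T, (f T).1 = T.1.insertAt 0 x (deepestIn T.1 K)) ∧
      Function.Injective f ∧
      (∀ T T', (rotationGraphOn G' {x}ᶜ).Adj T T' ↔
        (rotationGraphOn G' Set.univ).Adj (f T) (f T')) :=
  rooted_at_x_copy_of_rotationGraph_general G' x K hK hNx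
end

section
/- Let G be a connected graph with at least 3 vertices. If G is complete, then the rotation graph R(G) is bipartite with chromatic number 2; in fact, the map assigning to each search tree (which is a path, identified with a permutation of the vertices) the sign of the corresponding permutation is a proper 2-coloring of R(G). -/
open scoped Classical

universe u

variable {V : Type u}

/-!
A search tree of the complete graph is a path: once the root is removed, the remaining vertices
form a clique, hence a single component, so every vertex has at most one child. On a path
spanning `V` the depth is a bijection `V ≃ Fin |V|`, i.e. a permutation once a reference
enumeration of `V` is fixed. In `K_n` a rotation at the edge `uv` of a path merely exchanges
`u` and `v`, so it composes this bijection with the transposition `(u v)` and flips its sign.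
The sign is therefore a proper 2-colouring of `R(K_n)`, and rotating the top edge of any path
gives an edge of `R(K_n)`.
-/

namespace RTree

variable {T : RTree V}

def IsPath (T : RTree V) : Prop :=
  ∀ ⦃x w w'⦄, T.parent w = some x → T.parent w' = some x → w = w'

lemma mem_of_parent (hwf : T.WF) {x y : V} (h : T.parent x = some y) :
    x ∈ T.supp ∧ y ∈ T.supp ∧ x ≠ T.root := by
  have hxr : x ≠ T.root := by
    rintro rfl
    simp [hwf.2.1] at h
  have hx : x ∈ T.supp := by
    by_contra hx
    simp [hwf.2.2.1 x hx] at h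
  obtain ⟨u, hu, hpu⟩ := hwf.2.2.2.1 x hx hxr
  rw [hpu, Option.some_inj] at h
  exact ⟨hx, h ▸ hu, hxr⟩

lemma exists_pIter_eq_of_isAncestor {a b : V} (h : T.isAncestor b a) :
    ∃ n, T.pIter n a = some b := by
  induction h using Relation.ReflTransGen.head_induction_on with
  | refl => exact ⟨0, rfl⟩
  | head hac _ ih =>
      obtain ⟨n, hn⟩ := ih
      refine ⟨n + 1, ?_⟩
      simp only [pIter, show T.parent _ = some _ from hac, Option.bind_some, hn]

lemma pIter_depthOf (hwf : T.WF) {v : V} (hv : v ∈ T.supp) :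
    T.pIter (T.depthOf v) v = some T.root :=
  Nat.sInf_mem (exists_pIter_eq_of_isAncestor (hwf.2.2.2.2 v hv))

lemma depthOf_root (T : RTree V) : T.depthOf T.root = 0 :=
  Nat.le_zero.1 (Nat.sInf_le rfl)

lemma eq_root_of_depthOf_eq_zero (hwf : T.WF) {v : V} (hv : v ∈ T.supp)
    (h : T.depthOf v = 0) : v = T.root := by
  simpa [h, pIter] using pIter_depthOf hwf hv

lemma depthOf_parent (hwf : T.WF) {v p : V} (h : T.parent v = some p) :
    T.depthOf v = T.depthOf p + 1 := by
  obtain ⟨hv, hp, hvr⟩ := mem_of_parent hwf h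
  have pIter_succ : ∀ m, T.pIter (m + 1) v = T.pIter m p := by
    simp [pIter, h]
  have hle : T.depthOf v ≤ T.depthOf p + 1 :=
    Nat.sInf_le ((pIter_succ _).trans (pIter_depthOf hwf hp))
  obtain ⟨m, hm⟩ : ∃ m, T.depthOf v = m + 1 :=
    Nat.exists_eq_succ_of_ne_zero fun h0 => hvr (eq_root_of_depthOf_eq_zero hwf hv h0)
  have hge : T.depthOf p ≤ m := by
    have hd := pIter_depthOf hwf hv
    rw [hm, pIter_succ] at hd
    exact Nat.sInf_le hd
  omega

lemma depthOf_le_of_isAncestor (hwf : T.WF) {u v : V} (h : T.isAncestor u v) :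
    T.depthOf u ≤ T.depthOf v := by
  induction h using Relation.ReflTransGen.head_induction_on with
  | refl => exact le_rfl
  | head hac _ ih =>
      rw [depthOf_parent hwf hac]
      omega

lemma isAncestor_antisymm (hwf : T.WF) {u v : V} (huv : T.isAncestor u v)
    (hvu : T.isAncestor v u) : u = v := by
  rcases Relation.ReflTransGen.cases_head huv with h | ⟨c, hvc, hcu⟩
  · exact h.symm
  · have := depthOf_le_of_isAncestor hwf hcu
    have := depthOf_le_of_isAncestor hwf hvu
    have := depthOf_parent hwf hvc
    omega

lemma depthOf_injOn (hwf : T.WF) (hpath : T.IsPath) : Set.InjOn T.depthOf T.supp := by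
  intro a ha b hb hab
  obtain ⟨d, hd⟩ : ∃ d, T.depthOf a = d := ⟨_, rfl⟩
  induction d generalizing a b with
  | zero =>
      rw [eq_root_of_depthOf_eq_zero hwf ha hd, eq_root_of_depthOf_eq_zero hwf hb (hab ▸ hd)]
  | succ d ih =>
      have hne_root : ∀ x, T.depthOf x = d + 1 → x ≠ T.root := by
        rintro x hx rfl
        rw [depthOf_root] at hx
        omega
      obtain ⟨pa, hpa, hapa⟩ := hwf.2.2.2.1 a ha (hne_root a hd)
      obtain ⟨pb, hpb, hbpb⟩ := hwf.2.2.2.1 b hb (hne_root b (hab ▸ hd))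
      have := depthOf_parent hwf hapa
      have := depthOf_parent hwf hbpb
      obtain rfl : pa = pb := ih hpa hpb (by omega) (by omega)
      exact hpath hapa hbpb

lemma exists_depthOf_eq (hwf : T.WF) {v : V} (hv : v ∈ T.supp) {k : ℕ}
    (hk : k ≤ T.depthOf v) : ∃ w ∈ T.supp, T.depthOf w = k := by
  obtain ⟨d, hd⟩ : ∃ d, T.depthOf v = d := ⟨_, rfl⟩
  induction d generalizing v with
  | zero => exact ⟨v, hv, by omega⟩
  | succ d ih =>
      by_cases hkv : k = T.depthOf v
      · exact ⟨v, hv, hkv.symm⟩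
      have hvr : v ≠ T.root := by
        rintro rfl
        rw [depthOf_root] at hd
        omega
      obtain ⟨p, hp, hvp⟩ := hwf.2.2.2.1 v hv hvr
      have := depthOf_parent hwf hvp
      exact ih hp (by omega) (by omega)

lemma depthOf_lt_card [Fintype V] (hwf : T.WF) (hsupp : T.supp = Set.univ) (v : V) :
    T.depthOf v < Fintype.card V := by
  have hsub : Finset.range (T.depthOf v + 1) ⊆ Finset.univ.image T.depthOf := by
    intro k hk
    obtain ⟨w, -, hw⟩ := exists_depthOf_eq hwf (hsupp ▸ Set.mem_univ v)
      (Nat.lt_succ_iff.1 (Finset.mem_range.1 hk))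
    exact Finset.mem_image.2 ⟨w, Finset.mem_univ _, hw⟩
  calc T.depthOf v < (Finset.range (T.depthOf v + 1)).card := by simp
    _ ≤ (Finset.univ.image T.depthOf).card := Finset.card_le_card hsub
    _ ≤ Fintype.card V := Finset.card_image_le

lemma exists_parent_eq_root_mem_descendants (hwf : T.WF) {x : V} (hx : x ∈ T.supp)
    (hxr : x ≠ T.root) : ∃ c, T.parent c = some T.root ∧ x ∈ T.descendants c := by
  rcases Relation.ReflTransGen.cases_tail (hwf.2.2.2.2 x hx) with h | ⟨c, hxc, hcr⟩
  · exact absurd h.symm hxr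
  · exact ⟨c, hcr, hx, hxc⟩

lemma ne_root_of_mem_descendants (hwf : T.WF) {c x : V} (hc : T.parent c = some T.root)
    (hx : x ∈ T.descendants c) : x ≠ T.root := by
  rintro rfl
  obtain ⟨hcs, -, hcr⟩ := mem_of_parent hwf hc
  exact hcr (isAncestor_antisymm hwf hx.2 (hwf.2.2.2.2 c hcs))

lemma mem_descendants_of_parent (hwf : T.WF) {c w x : V} (hw : w ∈ T.descendants c)
    (hwx : T.parent w = some x) (hwc : w ≠ c) : x ∈ T.descendants c := by
  rcases Relation.ReflTransGen.cases_head hw.2 with h | ⟨b, hwb, hbc⟩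
  · exact absurd h hwc
  · obtain rfl : b = x := Option.some_inj.1 (hwb.symm.trans hwx)
    exact ⟨(mem_of_parent hwf hwx).2.1, hbc⟩

lemma subtreeAt_parent_of_mem {c x : V} (hx : x ∈ T.descendants c) (hxc : x ≠ c) :
    (T.subtreeAt c).parent x = T.parent x := by
  simp [subtreeAt, hxc, hx]

lemma isAncestor_subtreeAt (hwf : T.WF) {c v : V} (hv : v ∈ T.descendants c) :
    (T.subtreeAt c).isAncestor c v := by
  obtain ⟨hvs, hvc⟩ := hv
  induction hvc using Relation.ReflTransGen.head_induction_on with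
  | refl => exact Relation.ReflTransGen.refl
  | head hab hbc ih =>
      rename_i a b
      by_cases hac : a = c
      · exact hac ▸ Relation.ReflTransGen.refl
      · refine Relation.ReflTransGen.head ?_ (ih (mem_of_parent hwf hab).2.1)
        rw [parentRel, subtreeAt_parent_of_mem ⟨hvs, .head hab hbc⟩ hac]
        exact hab

lemma subtreeAt_WF (hwf : T.WF) {c : V} (hc : T.parent c = some T.root) :
    (T.subtreeAt c).WF := by
  have hcd : c ∈ T.descendants c := ⟨(mem_of_parent hwf hc).1, .refl⟩
  refine ⟨hcd, by simp [subtreeAt], fun v hv => ?_, fun v hv hvc => ?_,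
    fun v hv => isAncestor_subtreeAt hwf hv⟩
  · have hvc : v ≠ c := fun h => hv (h ▸ hcd)
    simp [subtreeAt, hvc, show v ∉ T.descendants c from hv]
  · obtain ⟨p, -, hp⟩ := hwf.2.2.2.1 v hv.1 (ne_root_of_mem_descendants hwf hc hv)
    exact ⟨p, mem_descendants_of_parent hwf hv hp hvc,
      (subtreeAt_parent_of_mem hv hvc).trans hp⟩

lemma IsPath.subtreeAt (hpath : T.IsPath) (c : V) : (T.subtreeAt c).IsPath := by
  intro x w w' hw hw'
  simp only [RTree.subtreeAt] at hw hw'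
  split_ifs at hw hw'
  exact hpath hw hw'

def map (σ : Equiv.Perm V) (T : RTree V) : RTree V where
  supp := σ.symm ⁻¹' T.supp
  root := σ T.root
  parent x := (T.parent (σ.symm x)).map σ

section map

variable (σ : Equiv.Perm V)

@[simp]
lemma map_parent (x : V) : (T.map σ).parent x = (T.parent (σ.symm x)).map σ := rfl

lemma isAncestor_map {a b : V} (h : T.isAncestor a b) : (T.map σ).isAncestor (σ a) (σ b) :=
  Relation.ReflTransGen.lift σ (fun x y (hxy : T.parent x = some y) =>
    show (T.map σ).parent (σ x) = some (σ y) by simp [hxy]) _ _ h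

lemma pIter_map (n : ℕ) (x : V) : (T.map σ).pIter n (σ x) = (T.pIter n x).map σ := by
  induction n generalizing x with
  | zero => rfl
  | succ n ih =>
      cases h : T.parent x with
      | none => simp [pIter, h]
      | some y => simp [pIter, h, ih]

lemma depthOf_map (x : V) : (T.map σ).depthOf (σ x) = T.depthOf x := by
  simp only [depthOf, pIter_map]
  congr 1
  ext n
  exact (Option.map_injective σ.injective).eq_iff (b := some T.root)

lemma WF.map (hwf : T.WF) : (T.map σ).WF := by
  refine ⟨by simpa [RTree.map] using hwf.1, by simp [RTree.map, hwf.2.1], fun v hv => ?_,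
    fun v hv hvr => ?_, fun v hv => ?_⟩
  · simp [RTree.map, hwf.2.2.1 _ hv]
  · have hvr' : σ.symm v ≠ T.root := fun h => hvr (by simp [RTree.map, ← h])
    obtain ⟨u, hu, hvu⟩ := hwf.2.2.2.1 _ hv hvr'
    exact ⟨σ u, by simpa [RTree.map] using hu, by simp [RTree.map, hvu]⟩
  · show (T.map σ).isAncestor (σ T.root) v
    simpa using isAncestor_map σ (hwf.2.2.2.2 _ hv)

lemma IsPath.map (hpath : T.IsPath) : (T.map σ).IsPath := by
  intro x w w' hw hw'
  simp only [RTree.map, Option.map_eq_some_iff] at hw hw'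
  obtain ⟨y, hwy, rfl⟩ := hw
  obtain ⟨y', hwy', hyy'⟩ := hw'
  obtain rfl := σ.injective hyy'
  exact σ.symm.injective (hpath hwy hwy')

end map

lemma parent_ne_self (hwf : T.WF) (v : V) : T.parent v ≠ some v := fun h => by
  have := depthOf_parent hwf h
  omega

lemma rotate_top_parent (hwf : T.WF) (hpath : T.IsPath) {u v : V} (huv : T.parent v = some u)
    (x : V) : (rotate ⊤ T u v).parent x = (T.parent (Equiv.swap u v x)).map (Equiv.swap u v) := by
  simp only [rotate]
  by_cases hxv : x = v
  · subst hxv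
    rw [if_pos rfl, Equiv.swap_apply_right]
    cases hp : T.parent u with
    | none => rfl
    | some w =>
        have hwu : w ≠ u := by
          rintro rfl
          exact parent_ne_self hwf _ hp
        have hwx : w ≠ x := by
          rintro rfl
          have := depthOf_parent hwf hp
          have := depthOf_parent hwf huv
          omega
        rw [Option.map_some, Equiv.swap_apply_of_ne_of_ne hwu hwx]
  by_cases hxu : x = u
  · subst hxu
    rw [if_neg hxv, if_pos rfl, Equiv.swap_apply_left, huv, Option.map_some,
      Equiv.swap_apply_left]
  rw [if_neg hxv, if_neg hxu, Equiv.swap_apply_of_ne_of_ne hxu hxv]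
  by_cases hxp : T.parent x = some v
  · have hxa : ∃ z ∈ T.descendants x, (⊤ : SimpleGraph V).Adj u z :=
      ⟨x, ⟨(mem_of_parent hwf hxp).1, .refl⟩, (SimpleGraph.top_adj _ _).2 (Ne.symm hxu)⟩
    rw [if_pos hxp, if_pos hxa, hxp, Option.map_some, Equiv.swap_apply_right]
  rw [if_neg hxp]
  cases hp : T.parent x with
  | none => rfl
  | some w =>
      have hwu : w ≠ u := by
        rintro rfl
        exact hxv (hpath hp huv)
      have hwv : w ≠ v := by
        rintro rfl
        exact hxp hp
      rw [Option.map_some, Equiv.swap_apply_of_ne_of_ne hwu hwv]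

/-- In the complete graph `u` is adjacent to every vertex, so each child of `v` is reattached
below `u`. -/
lemma rotate_top_eq_map (hwf : T.WF) (hpath : T.IsPath) {u v : V}
    (huv : T.parent v = some u) : rotate ⊤ T u v = T.map (Equiv.swap u v) := by
  obtain ⟨hv, hu, hvr⟩ := mem_of_parent hwf huv
  have hsupp : Equiv.swap u v ⁻¹' T.supp = T.supp := by
    ext x
    simp only [Set.mem_preimage, Equiv.swap_apply_def]
    split_ifs <;> simp_all
  have hroot : (if T.root = u then v else T.root) = Equiv.swap u v T.root := by
    split_ifs with h
    · rw [h, Equiv.swap_apply_left]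
    · rw [Equiv.swap_apply_of_ne_of_ne h (Ne.symm hvr)]
  have hparent := funext (rotate_top_parent hwf hpath huv)
  simp only [rotate, RTree.map, Equiv.symm_swap, RTree.mk.injEq] at hparent ⊢
  exact ⟨hsupp.symm, hroot, hparent⟩

section ofEquivFin

def ofEquivFin {n : ℕ} (e : V ≃ Fin (n + 1)) : RTree V where
  supp := Set.univ
  root := e.symm 0
  parent v := if h : e v = 0 then none else some (e.symm ((e v).pred h).castSucc)

variable {n : ℕ} (e : V ≃ Fin (n + 1))

lemma ofEquivFin_parent_symm_succ (i : Fin n) :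
    (ofEquivFin e).parent (e.symm i.succ) = some (e.symm i.castSucc) := by
  simp [ofEquivFin, Fin.succ_ne_zero]

lemma ofEquivFin_WF : (ofEquivFin e).WF := by
  refine ⟨trivial, by simp [ofEquivFin], fun v hv => absurd trivial hv, fun v _ hvr => ?_,
    fun v _ => ?_⟩
  · have hv0 : e v ≠ 0 := fun h => hvr (e.symm_apply_eq.2 h.symm).symm
    exact ⟨_, trivial, dif_neg hv0⟩
  · rw [← e.symm_apply_apply v]
    induction e v using Fin.induction with
    | zero => exact .refl
    | succ i ih => exact .head (ofEquivFin_parent_symm_succ e i) ih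

lemma ofEquivFin_isPath : (ofEquivFin e).IsPath := by
  intro x w w' hw hw'
  simp only [ofEquivFin] at hw hw'
  split_ifs at hw hw' with h h'
  rw [← Option.some_inj.1 hw', Option.some_inj, e.symm.apply_eq_iff_eq, Fin.castSucc_inj,
    Fin.pred_inj] at hw
  exact e.injective hw

end ofEquivFin

section depthSign

variable [Fintype V]

noncomputable def depthEquiv (hwf : T.WF) (hpath : T.IsPath) (hsupp : T.supp = Set.univ) :
    V ≃ Fin (Fintype.card V) :=
  Equiv.ofBijective (fun v => ⟨T.depthOf v, depthOf_lt_card hwf hsupp v⟩) <|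
    (Fintype.bijective_iff_injective_and_card _).2
      ⟨fun a b hab => depthOf_injOn hwf hpath (hsupp ▸ Set.mem_univ a)
        (hsupp ▸ Set.mem_univ b) (Fin.mk.inj_iff.1 hab), (Fintype.card_fin _).symm⟩

noncomputable def depthSign (hwf : T.WF) (hpath : T.IsPath) (hsupp : T.supp = Set.univ) :
    ℤˣ :=
  Equiv.Perm.sign ((depthEquiv hwf hpath hsupp).trans (Fintype.equivFin V).symm)

lemma depthSign_map {T' : RTree V} (σ : Equiv.Perm V) (hT' : T' = T.map σ) (hwf : T.WF)
    (hpath : T.IsPath) (hsupp : T.supp = Set.univ) (hwf' : T'.WF) (hpath' : T'.IsPath)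
    (hsupp' : T'.supp = Set.univ) :
    depthSign hwf' hpath' hsupp' = depthSign hwf hpath hsupp * Equiv.Perm.sign σ := by
  subst hT'
  have hequiv : depthEquiv hwf' hpath' hsupp' = σ.symm.trans (depthEquiv hwf hpath hsupp) := by
    ext x
    show (T.map σ).depthOf x = T.depthOf (σ.symm x)
    simpa using depthOf_map σ (σ.symm x)
  rw [depthSign, depthSign, hequiv, Equiv.trans_assoc, ← Equiv.Perm.mul_def,
    Equiv.Perm.sign_mul, Equiv.Perm.sign_symm]

lemma depthSign_rotate_top (hwf : T.WF) (hpath : T.IsPath) (hsupp : T.supp = Set.univ)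
    {u v : V} (huv : T.parent v = some u) (hwf' : (rotate ⊤ T u v).WF)
    (hpath' : (rotate ⊤ T u v).IsPath) (hsupp' : (rotate ⊤ T u v).supp = Set.univ) :
    depthSign hwf' hpath' hsupp' = -depthSign hwf hpath hsupp := by
  have hne : u ≠ v := by
    rintro rfl
    exact parent_ne_self hwf _ huv
  rw [depthSign_map _ (rotate_top_eq_map hwf hpath huv) hwf hpath hsupp,
    Equiv.Perm.sign_swap hne, mul_neg_one]

end depthSign

end RTree

open RTree

lemma IsSearchTreeRec.wf {G : SimpleGraph V} {T : RTree V} (h : IsSearchTreeRec G T) : T.WF := by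
  cases h with
  | intro _ hwf _ _ _ => exact hwf

lemma reachWithin_top {s : Set V} {a b : V} (ha : a ∈ s) (hb : b ∈ s) :
    reachWithin (⊤ : SimpleGraph V) s a b := by
  by_cases hab : a = b
  · exact hab ▸ Relation.ReflTransGen.refl
  · exact Relation.ReflTransGen.single ⟨ha, hb, by simpa using hab⟩

lemma IsSearchTreeRec.isPath_of_top {T : RTree V}
    (h : IsSearchTreeRec (⊤ : SimpleGraph V) T) : T.IsPath := by
  induction h with
  | intro T hwf _ hcomp _ IH =>
      intro x w w' hw hw'
      have hw_mem : w ∈ T.supp \ {T.root} :=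
        ⟨(mem_of_parent hwf hw).1, (mem_of_parent hwf hw).2.2⟩
      have hw'_mem : w' ∈ T.supp \ {T.root} :=
        ⟨(mem_of_parent hwf hw').1, (mem_of_parent hwf hw').2.2⟩
      by_cases hxr : x = T.root
      · subst hxr
        have h1 : w' ∈ T.descendants w :=
          (hcomp w hw w').2 ⟨hw'_mem.1, hw'_mem.2, reachWithin_top hw_mem hw'_mem⟩
        have h2 : w ∈ T.descendants w' :=
          (hcomp w' hw' w).2 ⟨hw_mem.1, hw_mem.2, reachWithin_top hw'_mem hw_mem⟩
        exact isAncestor_antisymm hwf h1.2 h2.2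
      · obtain ⟨c, hc, hxd⟩ := exists_parent_eq_root_mem_descendants hwf
          (mem_of_parent hwf hw).2.1 hxr
        have hsub : ∀ {y}, T.parent y = some x → (T.subtreeAt c).parent y = some x := by
          intro y hy
          have hyc : y ≠ c := by
            rintro rfl
            exact hxr (Option.some_inj.1 (hy.symm.trans hc))
          rw [subtreeAt_parent_of_mem ⟨(mem_of_parent hwf hy).1, .head hy hxd.2⟩ hyc, hy]
        exact IH c hc (hsub hw) (hsub hw')

lemma isSearchTreeRec_top_of_isPath {T : RTree V} (hfin : T.supp.Finite) (hwf : T.WF)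
    (hpath : T.IsPath) : IsSearchTreeRec (⊤ : SimpleGraph V) T := by
  obtain ⟨n, hn⟩ : ∃ n, T.supp.ncard = n := ⟨_, rfl⟩
  induction n using Nat.strong_induction_on generalizing T with
  | _ n ih =>
    refine .intro T hwf (fun a ha b hb => reachWithin_top ha hb) (fun c hc w => ?_)
      (fun c hc => ?_)
    · refine ⟨fun hw => ?_, fun ⟨hws, hwr, _⟩ => ?_⟩
      · have hwr := ne_root_of_mem_descendants hwf hc hw
        obtain ⟨hcs, -, hcr⟩ := mem_of_parent hwf hc
        exact ⟨hw.1, hwr, reachWithin_top ⟨hcs, hcr⟩ ⟨hw.1, hwr⟩⟩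
      · obtain ⟨c', hc', hwd⟩ := exists_parent_eq_root_mem_descendants hwf hws hwr
        rwa [hpath hc hc']
    · have hsub : T.descendants c ⊂ T.supp := by
        refine Set.ssubset_iff_subset_ne.2 ⟨fun x hx => hx.1, fun h => ?_⟩
        exact ne_root_of_mem_descendants hwf hc (h ▸ hwf.1) rfl
      exact ih _ (hn ▸ Set.ncard_lt_ncard hsub hfin) (hfin.subset hsub.subset)
        (subtreeAt_WF hwf hc) (hpath.subtreeAt c) rfl

lemma isSearchTreeOn_top_iff [Finite V] {s : Set V} {T : RTree V} :
    IsSearchTreeOn (⊤ : SimpleGraph V) s T ↔ T.supp = s ∧ T.WF ∧ T.IsPath :=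
  ⟨fun ⟨hs, h⟩ => ⟨hs, h.wf, h.isPath_of_top⟩,
    fun ⟨hs, hwf, hpath⟩ =>
      ⟨hs, isSearchTreeRec_top_of_isPath (Set.toFinite _) hwf hpath⟩⟩

noncomputable def signColoring [Fintype V] :
    (rotationGraphOn (⊤ : SimpleGraph V) Set.univ).Coloring ℤˣ :=
  SimpleGraph.Coloring.mk
    (fun T => depthSign (isSearchTreeOn_top_iff.1 T.2).2.1 (isSearchTreeOn_top_iff.1 T.2).2.2
      (isSearchTreeOn_top_iff.1 T.2).1) <| by
    rintro ⟨T, hT⟩ ⟨T', hT'⟩ ⟨-, ⟨u, v, huv, rfl⟩ | ⟨u, v, huv, rfl⟩⟩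
    · rw [depthSign_rotate_top _ _ _ huv]
      exact units_ne_neg_self _
    · rw [depthSign_rotate_top _ _ _ huv]
      exact (units_ne_neg_self _).symm

lemma exists_adj_rotationGraphOn_top [Fintype V] (hV : 1 < Fintype.card V) :
    ∃ T T', (rotationGraphOn (⊤ : SimpleGraph V) Set.univ).Adj T T' := by
  obtain ⟨n, hn⟩ := Nat.exists_eq_add_of_le' hV
  let e : V ≃ Fin (n + 1 + 1) := (Fintype.equivFin V).trans (finCongr hn)
  have huv : (ofEquivFin e).parent (e.symm 1) = some (e.symm 0) := by
    simpa using ofEquivFin_parent_symm_succ e 0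
  set T := ofEquivFin e
  have hT : IsSearchTreeOn ⊤ Set.univ T :=
    isSearchTreeOn_top_iff.2 ⟨rfl, ofEquivFin_WF e, ofEquivFin_isPath e⟩
  have hT' : IsSearchTreeOn ⊤ Set.univ (rotate ⊤ T (e.symm 0) (e.symm 1)) := by
    rw [rotate_top_eq_map (ofEquivFin_WF e) (ofEquivFin_isPath e) huv]
    exact isSearchTreeOn_top_iff.2 ⟨by simp [RTree.map, ofEquivFin],
      (ofEquivFin_WF e).map _, (ofEquivFin_isPath e).map _⟩
  refine ⟨⟨T, hT⟩, ⟨_, hT'⟩, fun h => ?_, .inl ⟨_, _, huv, rfl⟩⟩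
  have := congrArg RTree.root h
  simp [rotate, T, ofEquivFin] at this

/-- if `G` is complete with at least 3 vertices, then `R(G)` is bipartite
with chromatic number 2. -/
theorem rotationGraph_complete_chromaticNumber {V : Type u} [Fintype V] (G : SimpleGraph V)
    (h3 : 3 ≤ Fintype.card V) (hc : G = ⊤) :
    (rotationGraphOn G Set.univ).Colorable 2 ∧
      (rotationGraphOn G Set.univ).chromaticNumber = 2 := by
  subst hc
  have hcol : (rotationGraphOn (⊤ : SimpleGraph V) Set.univ).Colorable 2 :=
    signColoring.colorable
  obtain ⟨T, T', hadj⟩ := exists_adj_rotationGraphOn_top (V := V) (by omega)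
  exact ⟨hcol, le_antisymm hcol.chromaticNumber_le
    (SimpleGraph.two_le_chromaticNumber_of_adj hadj)⟩
end
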